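/- For every u ∈ U₀ and every composition λ: φ_u(λ) > 0 if and only if λ ∈ GK_u, i.e., if and only if λ ≤ t_n(u) in the order of the Gnedin–Kingman graph for some n ≥ 1. -/

import Mathlib

open scoped ENNReal NNReal

namespace GK

/-! ## The Gnedin–Kingman graph -/

/-- Decrement (if the part is ≥ 2) or delete (otherwise) the part of `μ` at position `p`. -/
def stepAt (μ : List ℕ) (p : ℕ) : List ℕ :=
  if 2 ≤ μ.getD p 0 then μ.set p (μ.getD p 0 - 1) else μ.eraseIdx p

/-- Edge multiplicity `κ(ν,μ)` of the Gnedin–Kingman graph: the number of positions of `μ`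
at which decrementing a part ≥ 2 (or deleting a part equal to 1) produces `ν`. -/
def kappa (ν μ : List ℕ) : ℕ :=
  ((Finset.range μ.length).filter fun p => stepAt μ p = ν).card

/-- `ν ↗ μ`. -/
def Rel (ν μ : List ℕ) : Prop := 0 < kappa ν μ

def IsComposition (l : List ℕ) : Prop := ∀ n ∈ l, 0 < n

/-- Compositions: finite lists of positive integers. -/
abbrev Comp := {l : List ℕ // IsComposition l}

/-- The empty composition ∅. -/
def cEmpty : Comp := ⟨[], fun _ h => nomatch h⟩

/-- Harmonicity, for `[0,∞]`-valued functions on the Gnedin–Kingman graph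
(with the conventions `0·∞ = 0` and `x + ∞ = ∞` of `ℝ≥0∞`). -/
def HarmonicE (φ : Comp → ℝ≥0∞) : Prop :=
  ∀ l : Comp, φ l = ∑' μ : Comp, (kappa l.1 μ.1 : ℝ≥0∞) * φ μ

/-- Harmonicity, for real-valued functions. -/
def HarmonicR (φ : Comp → ℝ) : Prop :=
  ∀ l : Comp, φ l = ∑' μ : Comp, (kappa l.1 μ.1 : ℝ) * φ μ

/-- A finite harmonic function: real-valued (hence finite), nonnegative, harmonic. -/
def FiniteHarmonic (φ : Comp → ℝ) : Prop :=
  HarmonicR φ ∧ ∀ l, 0 ≤ φ l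

/-- The quasi-shuffle coefficient `c^γ_{α,β}`: the number of pairs of strictly increasing
maps `f, g` into the positions of `γ` which jointly cover all positions of `γ` and such that
each part of `γ` is the sum of the corresponding parts of `α` and `β`. -/
noncomputable def qsCoeff (α β γ : List ℕ) : ℕ :=
  Nat.card {fg : (Fin α.length → Fin γ.length) × (Fin β.length → Fin γ.length) //
    StrictMono fg.1 ∧ StrictMono fg.2 ∧
    (∀ s, (∃ i, fg.1 i = s) ∨ (∃ j, fg.2 j = s)) ∧
    ∀ s : Fin γ.length,
      γ.get s = (∑ i, if fg.1 i = s then α.get i else 0) +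
                (∑ j, if fg.2 j = s then β.get j else 0)}

/-- Indecomposability of a finite harmonic function normalized at ∅. -/
def IndecFin (φ : Comp → ℝ) : Prop :=
  ∀ φ₁ φ₂ : Comp → ℝ, FiniteHarmonic φ₁ → FiniteHarmonic φ₂ →
    φ₁ cEmpty = 1 → φ₂ cEmpty = 1 →
    ∀ c₁ c₂ : ℝ, 0 < c₁ → 0 < c₂ → c₁ + c₂ = 1 →
      (∀ l, φ l = c₁ * φ₁ l + c₂ * φ₂ l) → φ = φ₁ ∨ φ = φ₂

/-! ## Typed weight sequences, `M°_λ` and `U₀` -/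

/-- `M°_λ(v)` for a typed weight sequence `v` (`true` = h, `false` = v): the sum over all
decompositions of `λ` into consecutive (possibly empty) blocks, one for each entry of `v`,
where an h-block has at most one part and contributes `w^{|block|}`, and a v-block has all
parts equal to 1 and contributes `w^{ℓ}/ℓ!`. -/
noncomputable def Mcirc : List (ℝ × Bool) → List ℕ → ℝ
  | [], l => if l = [] then 1 else 0
  | (w, t) :: v, l =>
      ∑ i ∈ Finset.range (l.length + 1),
        (if t then (if (l.take i).length ≤ 1 then w ^ (l.take i).sum else 0)
         else if ∀ n ∈ l.take i, n = 1 then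
           w ^ (l.take i).length / ((l.take i).length.factorial : ℝ)
         else 0) * Mcirc v (l.drop i)

/-- Membership in `U₀`: positive weights of total sum 1, no two consecutive v's. -/
def memU0 (u : List (ℝ × Bool)) : Prop :=
  (∀ p ∈ u, 0 < p.1) ∧ (u.map Prod.fst).sum = 1 ∧
    List.Chain' (fun p q => p.2 = true ∨ q.2 = true) u

/-- `t_n(u)`: replace each h-interval by a part `n` and each v-interval by `n` ones. -/
def tnU (u : List (ℝ × Bool)) (n : ℕ) : List ℕ :=
  (u.map fun p => if p.2 then [n] else List.replicate n 1).flatten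

/-- Merge each maximal run of consecutive v-intervals into a single v-interval,
summing the weights. -/
def mergeV : List (ℝ × Bool) → List (ℝ × Bool)
  | [] => []
  | (w, true) :: rest => (w, true) :: mergeV rest
  | (w, false) :: rest =>
      match mergeV rest with
      | (w', false) :: rest' => (w + w', false) :: rest'
      | r => (w, false) :: r

/-! ## The set `Ũ₀` and the functions `φ_ũ` -/

/-- An element of `Ũ₀`. `t i = true` means type h, `false` means type v; `sep i` are the
separating compositions λ₀, …, λ_m. Only `w i`, `t i` for `i < m` and `sep i` for `i ≤ m`
are relevant. -/
structure UTilde where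
  m : ℕ
  w : ℕ → ℝ
  t : ℕ → Bool
  sep : ℕ → List ℕ
  sep_pos : ∀ i, i ≤ m → ∀ n ∈ sep i, 0 < n
  sep_nonempty : ∃ i, i ≤ m ∧ sep i ≠ []
  w_pos : ∀ i, i < m → 0 < w i
  w_sum : ∑ i ∈ Finset.range m, w i = 1
  vv : ∀ i, i + 1 < m → t i = false → t (i + 1) = false → sep (i + 1) ≠ []
  v_left : ∀ i, i < m → t i = false → sep i ≠ [] → 2 ≤ (sep i).getLastD 0
  v_right : ∀ i, i < m → t i = false → sep (i + 1) ≠ [] → 2 ≤ (sep (i + 1)).headD 0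

namespace UTilde

variable (u : UTilde)

/-- `λ₀ ⊔ f 0 ⊔ λ₁ ⊔ … ⊔ f (m-1) ⊔ λ_m`. -/
def blocks (f : ℕ → List ℕ) : List ℕ :=
  u.sep 0 ++ (List.ofFn fun i : Fin u.m => f (i : ℕ) ++ u.sep ((i : ℕ) + 1)).flatten

/-- `t_n(ũ)`. -/
def tn (n : ℕ) : List ℕ :=
  u.blocks fun i => if u.t i then [n] else List.replicate n 1

/-- Membership in `GK_ũ`. -/
def GKmem (l : List ℕ) : Prop := ∃ n, 1 ≤ n ∧ Relation.ReflTransGen Rel l (u.tn n)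

/-- Position `i` (of type h) is adjacent to a v-interval. -/
def adj (i : ℕ) : Prop :=
  (0 < i ∧ u.t (i - 1) = false ∧ u.sep i = []) ∨
  (i + 1 < u.m ∧ u.t (i + 1) = false ∧ u.sep (i + 1) = [])

instance (i : ℕ) : Decidable (u.adj i) := by unfold adj; infer_instance

def d (i : ℕ) : ℕ := if u.adj i then 2 else 1

/-- `λ(a,b)`, where `c` encodes both vectors: `a i = c i` on h-positions and
`b i = c i` on v-positions. -/
def lam (c : ℕ → ℕ) : List ℕ :=
  u.blocks fun i => if u.t i then [u.d i + c i] else List.replicate (c i) 1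

/-- `λ_ũ = λ(0,0)`. -/
def lam0 : List ℕ := u.lam fun _ => 0

/-- `Π_{i : t_i = h} w_i^{a_i} · Π_{i : t_i = v} w_i^{b_i}/b_i!`. -/
noncomputable def phiVal (c : ℕ → ℕ) : ℝ≥0∞ :=
  ∏ i ∈ Finset.range u.m,
    if u.t i then ENNReal.ofReal (u.w i) ^ c i
    else ENNReal.ofReal (u.w i) ^ c i / ((c i).factorial : ℝ≥0∞)

open Classical in
/-- The semifinite harmonic function `φ_ũ`. -/
noncomputable def phi (l : List ℕ) : ℝ≥0∞ :=
  if h : ∃ c : ℕ → ℕ, l = u.lam c then u.phiVal h.choose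
  else if u.GKmem l then ⊤ else 0

/-- `u^ε(ũ)`: each part of each separating composition is replaced by an h-interval
of length `ε`. -/
def uEps (ε : ℝ) : List (ℝ × Bool) :=
  ((u.sep 0).map fun _ => (ε, true)) ++
    (List.ofFn fun i : Fin u.m =>
      (u.w (i : ℕ), u.t (i : ℕ)) :: ((u.sep ((i : ℕ) + 1)).map fun _ => (ε, true))).flatten

/-- `n(ũ) = |λ₀| + … + |λ_m|`. -/
def nU : ℕ := ∑ i ∈ Finset.range (u.m + 1), (u.sep i).sum

/-- The list of intervals of `ũ` (separating compositions dropped). -/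
def ubarList : List (ℝ × Bool) := List.ofFn fun i : Fin u.m => (u.w (i : ℕ), u.t (i : ℕ))

end UTilde

/-! ## The cone `K` and the maps `F_φ` -/

/-- `V`: finitely supported real functions on compositions. -/
abbrev V := Comp →₀ ℝ

/-- `W`: span of the vectors `e_λ − Σ_μ κ(λ,μ)·e_μ`. -/
noncomputable def Wsub : Submodule ℝ V :=
  Submodule.span ℝ
    {x : V | ∃ l : Comp, ∀ μ : Comp, x μ = (if μ = l then 1 else 0) - (kappa l.1 μ.1 : ℝ)}

/-- `R = V/W`. -/
abbrev Rq := V ⧸ Wsub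

/-- The cone `K ⊆ R`: classes of nonnegative vectors. -/
def Kcone : Set Rq :=
  {a | ∃ x : V, (∀ μ, 0 ≤ x μ) ∧ Submodule.Quotient.mk x = a}

/-- `Σ_λ x(λ)·φ(λ)` for a representative `x`. -/
noncomputable def FphiV (φ : Comp → ℝ≥0∞) (x : V) : ℝ≥0∞ :=
  ∑' μ : Comp, ENNReal.ofReal (x μ) * φ μ

open Classical in
/-- `F_φ : K → [0,∞]` (defined via a choice of nonnegative representative; for harmonic `φ`
it is well defined). Outside `K` we set it to `0`. -/
noncomputable def Fphi (φ : Comp → ℝ≥0∞) (a : Rq) : ℝ≥0∞ :=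
  if h : a ∈ Kcone then FphiV φ h.choose else 0

/-- Semifiniteness: not finite, and `F_φ` is determined by its finite values from below. -/
def Semifinite (φ : Comp → ℝ≥0∞) : Prop :=
  (¬ ∀ l, φ l < ⊤) ∧
    ∀ a ∈ Kcone, Fphi φ a =
      sSup {y | ∃ b ∈ Kcone, a - b ∈ Kcone ∧ Fphi φ b < ⊤ ∧ y = Fphi φ b}

/-- Indecomposability of a semifinite harmonic function. -/
def IndecSemifinite (φ : Comp → ℝ≥0∞) : Prop :=
  ∀ ψ : Comp → ℝ≥0∞, HarmonicE ψ →
    (((∀ l, ψ l < ⊤) ∧ ψ ≠ 0) ∨ Semifinite ψ) →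
    (∀ a ∈ Kcone, Fphi ψ a ≤ Fphi φ a) →
    ∃ c : ℝ≥0, ∀ l, ψ l = (c : ℝ≥0∞) * φ l

end GK

/-!
The support of `φ_u` depends only on the types of `u`: since all weights are positive, `M°_λ(u) > 0`
exactly when `λ` splits into consecutive blocks, one per interval, with at most one part on an
h-interval and only ones on a v-interval. Such admissible compositions are closed under going down
in the Gnedin–Kingman graph, and `t_n(u)` is admissible, which gives one direction. Conversely each
admissible block of `λ` lies below `(n)` resp. `(1,…,1)` (`n` ones) as soon as `n ≥ max 1 |λ|`, and
concatenating these chains gives `λ ≤ t_n(u)`.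
-/

namespace GK

open Relation

section Graph

lemma rel_iff {a b : List ℕ} : Rel a b ↔ ∃ p < b.length, stepAt b p = a := by
  simp [Rel, kappa, Finset.card_pos, Finset.filter_nonempty_iff]

lemma stepAt_append_left {a : List ℕ} (b : List ℕ) {p : ℕ} (hp : p < a.length) :
    stepAt (a ++ b) p = stepAt a p ++ b := by
  unfold stepAt
  rw [List.getD_eq_getElem?_getD, List.getElem?_append_left hp, ← List.getD_eq_getElem?_getD]
  split
  · rw [List.set_append_left _ _ hp]
  · rw [List.eraseIdx_append_of_lt_length hp]

lemma stepAt_append_right (a : List ℕ) {b : List ℕ} {p : ℕ} (hp : a.length ≤ p) :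
    stepAt (a ++ b) p = a ++ stepAt b (p - a.length) := by
  unfold stepAt
  rw [List.getD_eq_getElem?_getD, List.getElem?_append_right hp, ← List.getD_eq_getElem?_getD]
  split
  · rw [List.set_append_right _ _ hp]
  · rw [List.eraseIdx_append_of_length_le hp]

lemma length_stepAt_le (c : List ℕ) (p : ℕ) : (stepAt c p).length ≤ c.length := by
  unfold stepAt
  split
  · simp
  · exact List.length_eraseIdx_le c p

lemma stepAt_subset_of_forall_eq_one {c : List ℕ} (hc : ∀ n ∈ c, n = 1) (p : ℕ) :
    stepAt c p ⊆ c := by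
  have hp : c.getD p 0 < 2 := by
    rw [List.getD_eq_getElem?_getD]
    rcases lt_or_ge p c.length with hp | hp
    · simp [List.getElem?_eq_getElem hp, hc _ (List.getElem_mem hp)]
    · simp [List.getElem?_eq_none hp]
  rw [stepAt, if_neg hp.not_ge]
  exact (List.eraseIdx_sublist c p).subset

lemma rel_append_left (x : List ℕ) {a b : List ℕ} (h : Rel a b) : Rel (x ++ a) (x ++ b) := by
  obtain ⟨p, hp, rfl⟩ := rel_iff.1 h
  refine rel_iff.2 ⟨x.length + p, by simpa using hp, ?_⟩
  rw [stepAt_append_right _ (by omega), Nat.add_sub_cancel_left]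

lemma rel_append_right (y : List ℕ) {a b : List ℕ} (h : Rel a b) : Rel (a ++ y) (b ++ y) := by
  obtain ⟨p, hp, rfl⟩ := rel_iff.1 h
  exact rel_iff.2 ⟨p, by simp; omega, stepAt_append_left _ hp⟩

lemma reflTransGen_rel_append {a b c d : List ℕ} (hab : ReflTransGen Rel a b)
    (hcd : ReflTransGen Rel c d) : ReflTransGen Rel (a ++ c) (b ++ d) :=
  (hab.lift (· ++ c) fun _ _ => rel_append_right c).trans
    (hcd.lift (b ++ ·) fun _ _ => rel_append_left b)

lemma reflTransGen_rel_singleton {k n : ℕ} (hk : 1 ≤ k) (hkn : k ≤ n) :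
    ReflTransGen Rel [k] [n] := by
  induction n, hkn using Nat.le_induction with
  | base => rfl
  | succ n hn ih => exact ih.tail (rel_iff.2 ⟨0, by simp, by simp [stepAt]; omega⟩)

lemma reflTransGen_rel_nil_singleton {n : ℕ} (hn : 1 ≤ n) : ReflTransGen Rel [] [n] :=
  (ReflTransGen.single (rel_iff.2 ⟨0, by simp, by simp [stepAt]⟩)).trans
    (reflTransGen_rel_singleton le_rfl hn)

lemma reflTransGen_rel_replicate {k n : ℕ} (hkn : k ≤ n) :
    ReflTransGen Rel (List.replicate k 1) (List.replicate n 1) := by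
  induction n, hkn using Nat.le_induction with
  | base => rfl
  | succ n hn ih =>
    exact ih.tail (rel_iff.2 ⟨0, by simp, by simp [stepAt, List.replicate_succ]⟩)

end Graph

section Admissible

def topBlock (t : Bool) (n : ℕ) : List ℕ := if t then [n] else List.replicate n 1

def BlockAdmissible : Bool → List ℕ → Prop
  | true, c => c.length ≤ 1
  | false, c => ∀ n ∈ c, n = 1

def Admissible : List Bool → List ℕ → Prop
  | [], l => l = []
  | t :: ts, l => ∃ a b, l = a ++ b ∧ BlockAdmissible t a ∧ Admissible ts b

lemma BlockAdmissible.stepAt {t : Bool} {c : List ℕ} (h : BlockAdmissible t c) (p : ℕ) :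
    BlockAdmissible t (stepAt c p) := by
  cases t with
  | true => exact (length_stepAt_le c p).trans h
  | false => exact fun n hn => h n (stepAt_subset_of_forall_eq_one h p hn)

lemma Admissible.stepAt {ts : List Bool} {l : List ℕ} (h : Admissible ts l) (p : ℕ) :
    Admissible ts (stepAt l p) := by
  induction ts generalizing l p with
  | nil =>
    rw [Admissible] at h ⊢
    simp [h, GK.stepAt]
  | cons t ts ih =>
    obtain ⟨a, b, rfl, ha, hb⟩ := h
    rcases lt_or_ge p a.length with hp | hp
    · exact ⟨_, b, stepAt_append_left b hp, ha.stepAt p, hb⟩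
    · exact ⟨a, _, stepAt_append_right a hp, ha, ih hb _⟩

lemma Admissible.of_reflTransGen_rel {ts : List Bool} {a b : List ℕ}
    (hab : ReflTransGen Rel a b) (hb : Admissible ts b) : Admissible ts a := by
  induction hab using ReflTransGen.head_induction_on with
  | refl => exact hb
  | head hr _ ih =>
    obtain ⟨p, -, rfl⟩ := rel_iff.1 hr
    exact ih.stepAt p

lemma admissible_topBlocks (ts : List Bool) (n : ℕ) :
    Admissible ts (ts.map (topBlock · n)).flatten := by
  induction ts with
  | nil => rfl
  | cons t ts ih =>
    refine ⟨topBlock t n, _, rfl, ?_, ih⟩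
    cases t with
    | true => simp [topBlock, BlockAdmissible]
    | false => simp [topBlock, BlockAdmissible, List.mem_replicate]

lemma BlockAdmissible.reflTransGen_topBlock {t : Bool} {c : List ℕ} (h : BlockAdmissible t c)
    (hc : ∀ x ∈ c, 0 < x) {n : ℕ} (hn : 1 ≤ n) (hcn : c.sum ≤ n) :
    ReflTransGen Rel c (topBlock t n) := by
  cases t with
  | true =>
    match c, h with
    | [], _ => exact reflTransGen_rel_nil_singleton hn
    | [k], _ => exact reflTransGen_rel_singleton (hc k (by simp)) (by simpa using hcn)
  | false =>
    have hrep : c = List.replicate c.length 1 := List.eq_replicate_of_mem h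
    rw [hrep] at hcn ⊢
    exact reflTransGen_rel_replicate (by simpa using hcn)

lemma Admissible.reflTransGen_topBlocks {ts : List Bool} {l : List ℕ} (h : Admissible ts l)
    (hl : ∀ x ∈ l, 0 < x) {n : ℕ} (hn : 1 ≤ n) (hln : l.sum ≤ n) :
    ReflTransGen Rel l (ts.map (topBlock · n)).flatten := by
  induction ts generalizing l with
  | nil => rw [show l = [] from h]; rfl
  | cons t ts ih =>
    obtain ⟨a, b, rfl, ha, hb⟩ := h
    simp only [List.mem_append, List.sum_append] at hl hln
    exact reflTransGen_rel_append
      (ha.reflTransGen_topBlock (fun x hx => hl x (.inl hx)) hn (by omega))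
      (ih hb (fun x hx => hl x (.inr hx)) (by omega))

theorem admissible_iff_exists_reflTransGen_topBlocks (ts : List Bool) {l : List ℕ}
    (hl : ∀ x ∈ l, 0 < x) :
    Admissible ts l ↔ ∃ n, 1 ≤ n ∧ ReflTransGen Rel l (ts.map (topBlock · n)).flatten :=
  ⟨fun h => ⟨max 1 l.sum, le_max_left _ _, h.reflTransGen_topBlocks hl (le_max_left _ _)
      (le_max_right _ _)⟩,
    fun ⟨n, _, hln⟩ => .of_reflTransGen_rel hln (admissible_topBlocks ts n)⟩

end Admissible

section Mcirc

noncomputable def blockWeight (w : ℝ) (t : Bool) (c : List ℕ) : ℝ :=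
  if t then (if c.length ≤ 1 then w ^ c.sum else 0)
  else if ∀ n ∈ c, n = 1 then w ^ c.length / (c.length.factorial : ℝ) else 0

lemma Mcirc_cons (w : ℝ) (t : Bool) (v : List (ℝ × Bool)) (l : List ℕ) :
    Mcirc ((w, t) :: v) l =
      ∑ i ∈ Finset.range (l.length + 1), blockWeight w t (l.take i) * Mcirc v (l.drop i) :=
  rfl

lemma blockWeight_nonneg {w : ℝ} (hw : 0 ≤ w) (t : Bool) (c : List ℕ) :
    0 ≤ blockWeight w t c := by
  unfold blockWeight
  split_ifs <;> positivity

lemma blockWeight_pos_iff {w : ℝ} (hw : 0 < w) (t : Bool) (c : List ℕ) :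
    0 < blockWeight w t c ↔ BlockAdmissible t c := by
  cases t
  all_goals
    simp only [blockWeight, BlockAdmissible, Bool.false_eq_true, if_true, if_false]
    split_ifs with hc
    · exact iff_of_true (by positivity) hc
    · exact iff_of_false (lt_irrefl 0) hc

lemma Mcirc_nonneg {u : List (ℝ × Bool)} (hu : ∀ p ∈ u, 0 ≤ p.1) (l : List ℕ) :
    0 ≤ Mcirc u l := by
  induction u generalizing l with
  | nil => rw [Mcirc]; split <;> norm_num
  | cons q v ih =>
    rw [Mcirc_cons]
    exact Finset.sum_nonneg fun i _ =>
      mul_nonneg (blockWeight_nonneg (hu q (by simp)) _ _) (ih (fun p hp => hu p (by simp [hp])) _)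

lemma Mcirc_cons_pos_iff {w : ℝ} (hw : 0 < w) (t : Bool) {v : List (ℝ × Bool)}
    (hv : ∀ p ∈ v, 0 ≤ p.1) (l : List ℕ) :
    0 < Mcirc ((w, t) :: v) l ↔
      ∃ a b, l = a ++ b ∧ 0 < blockWeight w t a ∧ 0 < Mcirc v b := by
  have hterm (a b : List ℕ) : 0 < blockWeight w t a * Mcirc v b ↔
      0 < blockWeight w t a ∧ 0 < Mcirc v b :=
    ⟨fun h => ⟨pos_of_mul_pos_left h (Mcirc_nonneg hv b),
      pos_of_mul_pos_right h (blockWeight_nonneg hw.le t a)⟩, fun h => mul_pos h.1 h.2⟩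
  rw [Mcirc_cons, Finset.sum_pos_iff_of_nonneg fun i _ =>
    mul_nonneg (blockWeight_nonneg hw.le t _) (Mcirc_nonneg hv _)]
  constructor
  · rintro ⟨i, -, hi⟩
    exact ⟨_, _, (List.take_append_drop i l).symm, (hterm _ _).1 hi⟩
  · rintro ⟨a, b, rfl, hab⟩
    refine ⟨a.length, by simp, ?_⟩
    simpa using (hterm a b).2 hab

theorem Mcirc_pos_iff_admissible {u : List (ℝ × Bool)} (hu : ∀ p ∈ u, 0 < p.1) (l : List ℕ) :
    0 < Mcirc u l ↔ Admissible (u.map Prod.snd) l := by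
  induction u generalizing l with
  | nil => by_cases hl : l = [] <;> simp [Mcirc, Admissible, hl]
  | cons q v ih =>
    obtain ⟨w, t⟩ := q
    have hv : ∀ p ∈ v, 0 < p.1 := fun p hp => hu p (by simp [hp])
    have hw : 0 < w := hu (w, t) (by simp)
    rw [Mcirc_cons_pos_iff hw t fun p hp => (hv p hp).le]
    simp only [List.map_cons, Admissible, blockWeight_pos_iff hw, ih hv]

end Mcirc

/-- for `u ∈ U₀`, `φ_u(λ) > 0` iff `λ ∈ GK_u`, i.e. `λ ≤ t_n(u)` for some `n ≥ 1`. -/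
theorem phiU_support (u : List (ℝ × Bool)) (hu : memU0 u) (l : Comp) :
    0 < Mcirc u l.1 ↔ ∃ n, 1 ≤ n ∧ Relation.ReflTransGen Rel l.1 (tnU u n) := by
  have htn (n : ℕ) : tnU u n = ((u.map Prod.snd).map (topBlock · n)).flatten := by
    simp [tnU, topBlock, Function.comp_def]
  simp only [htn]
  rw [Mcirc_pos_iff_admissible hu.1, admissible_iff_exists_reflTransGen_topBlocks _ l.2]

end GK
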